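/- arXiv:2203.16108 — 6 statements merged into one kernel-verified Lean document; each statement's English description precedes it below -/
import Mathlib

section
/- Let k, C, c, x ∈ ℝ with c ≤ C ≤ k, z > 0, λ* > 0, and set γ* = (C - c)²/2. Define f(B) = -(1/2)(k - B)² - λ*(zB - x) + γ*·1{B ≥ C} on (-∞, k]. Then the function B*(z) defined by B* = k - λ*z if k - λ*z ≥ C, B* = C if c ≤ k - λ*z < C, and B* = k - λ*z if k - λ*z < c, maximizes f over (-∞, k]. -/
/-- VaR-constraint pointwise optimisation. With `c ≤ C ≤ k`, `z, λ* > 0`,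
`γ* = (C - c)²/2` and `f(B) = -(1/2)(k-B)² - λ*(zB - x) + γ*·1{B ≥ C}` on `(-∞, k]`,
the point `B*` (equal to `C` when `c ≤ k - λ*z < C` and to `k - λ*z` otherwise)
maximizes `f` over `(-∞, k]`. -/
theorem stmt5 (k C c x z lam : ℝ) (hcC : c ≤ C) (hCk : C ≤ k) (hz : 0 < z) (hlam : 0 < lam)
    (γ : ℝ) (hγ : γ = (C - c) ^ 2 / 2)
    (f : ℝ → ℝ)
    (hf : f = fun B => -(1 / 2) * (k - B) ^ 2 - lam * (z * B - x) + (if C ≤ B then γ else 0))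
    (Bstar : ℝ)
    (hBstar : Bstar =
      if C ≤ k - lam * z then k - lam * z
      else if c ≤ k - lam * z then C
      else k - lam * z) :
    ∀ B ≤ k, f B ≤ f Bstar := by
  intro B hB
  subst hf hγ
  set t := k - lam * z with ht
  simp only
  have hγnn : (0:ℝ) ≤ (C - c) ^ 2 / 2 := by positivity
  by_cases h1 : C ≤ t
  · rw [hBstar, if_pos h1, if_pos h1]
    by_cases h2 : C ≤ B
    · rw [if_pos h2]; nlinarith [sq_nonneg (B - t)]
    · rw [if_neg h2]; nlinarith [sq_nonneg (B - t)]
  · rw [hBstar, if_neg h1]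
    by_cases h3 : c ≤ t
    · rw [if_pos h3, if_pos le_rfl]
      by_cases h2 : C ≤ B
      · rw [if_pos h2]
        push_neg at h1
        nlinarith [sq_nonneg (B - t), sq_nonneg (B - C)]
      · rw [if_neg h2]
        push_neg at h1
        nlinarith [sq_nonneg (B - t), sq_nonneg (C - t)]
    · rw [if_neg h3]
      push_neg at h1 h3
      have : ¬ C ≤ t := not_le.mpr h1
      rw [if_neg this]
      by_cases h2 : C ≤ B
      · rw [if_pos h2]
        nlinarith [sq_nonneg (B - t)]
      · rw [if_neg h2]
        nlinarith [sq_nonneg (B - t)]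
end

section
/- Let k, C, x ∈ ℝ with C ≤ k, z > 0, λ* > 0, γ* ≥ 0, ν ∈ ℝ. Define f(B) = -(1/2)(k - B)² - λ*(zB - x) - γ*·((C - B)·1{B ≤ C} - ν) on (-∞, k]. Then B* given by: B* = k - λ*z if k - λ*z ≥ C; B* = C if C - γ* ≤ k - λ*z < C; B* = k - λ*z + γ* if k - λ*z < C - γ*, maximizes f over (-∞, k]. -/
/-- `ℙ`-expected-shortfall pointwise optimisation. With `C ≤ k`, `z, λ* > 0`,
`γ* ≥ 0`, and `f(B) = -(1/2)(k-B)² - λ*(zB - x) - γ*((C-B)·1{B ≤ C} - ν)` on `(-∞, k]`,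
the piecewise point `B*` maximizes `f` over `(-∞, k]`. -/
theorem stmt6 (k C x ν z lam γ : ℝ) (hCk : C ≤ k) (hz : 0 < z) (hlam : 0 < lam) (hγ : 0 ≤ γ)
    (f : ℝ → ℝ)
    (hf : f = fun B => -(1 / 2) * (k - B) ^ 2 - lam * (z * B - x) -
      γ * ((if B ≤ C then C - B else 0) - ν))
    (Bstar : ℝ)
    (hBstar : Bstar =
      if C ≤ k - lam * z then k - lam * z
      else if C - γ ≤ k - lam * z then C
      else k - lam * z + γ) :
    ∀ B ≤ k, f B ≤ f Bstar := by
  subst hf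
  intro B hB
  simp only
  have hlz : 0 < lam * z := mul_pos hlam hz
  by_cases h1 : C ≤ k - lam * z
  · rw [hBstar, if_pos h1]
    by_cases hB1 : B ≤ C
    · by_cases hS : k - lam * z ≤ C
      · have hEq : C = k - lam * z := le_antisymm h1 hS
        simp only [hB1, hS, if_true]
        nlinarith [sq_nonneg (B - (k - lam * z)), mul_nonneg hγ (sub_nonneg.2 hB1)]
      · simp only [hB1, hS, if_true, if_false]
        nlinarith [sq_nonneg (B - (k - lam * z)), mul_nonneg hγ (sub_nonneg.2 hB1)]
    · by_cases hS : k - lam * z ≤ C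
      · have hEq : C = k - lam * z := le_antisymm h1 hS
        simp only [hB1, hS, if_true, if_false]
        nlinarith [sq_nonneg (B - (k - lam * z))]
      · simp only [hB1, hS, if_false]
        nlinarith [sq_nonneg (B - (k - lam * z))]
  · push_neg at h1
    rw [hBstar, if_neg (not_le.2 h1)]
    by_cases h2 : C - γ ≤ k - lam * z
    · rw [if_pos h2]
      by_cases hB1 : B ≤ C
      · simp only [hB1, le_refl, if_true]
        nlinarith [sq_nonneg (B - (k - lam * z)), sq_nonneg (C - (k - lam * z)),
          mul_nonneg (sub_nonneg.2 hB1) (sub_nonneg.2 h2)]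
      · simp only [hB1, le_refl, if_true, if_false]
        push_neg at hB1
        nlinarith [sq_nonneg (B - (k - lam * z)), sq_nonneg (C - (k - lam * z))]
    · push_neg at h2
      rw [if_neg (not_le.2 h2)]
      have hS : k - lam * z + γ ≤ C := by linarith
      by_cases hB1 : B ≤ C
      · simp only [hB1, hS, if_true]
        nlinarith [sq_nonneg (B - (k - lam * z + γ))]
      · simp only [hB1, hS, if_true, if_false]
        push_neg at hB1
        nlinarith [sq_nonneg (B - (k - lam * z)), sq_nonneg (C - (k - lam * z) - γ)]
end

section
/- Let Z be a positive random variable with E[Z] = 1, E[Z²] < ∞, and a continuous strictly positive density on (0,∞) for its law. Let C < x < k. Define V(λ) = E[Z · max(k - λZ, C)] for λ > 0. Then V is continuous, strictly decreasing, V(λ) → k as λ → 0⁺, V(λ) → C as λ → ∞, and there exists λ* > 0 with V(λ*) = x. -/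
open MeasureTheory Filter Topology

/-- For a positive r.v. `Z` with `E[Z] = 1`, finite second moment, and a
continuous strictly positive density `d` on `(0,∞)`, and `C < x < k`, the budget function
`V(λ) = E[Z · max(k - λZ, C)]` is continuous and strictly decreasing on `(0,∞)`,
`V(λ) → k` as `λ → 0⁺`, `V(λ) → C` as `λ → ∞`, and there exists `λ* > 0` with `V(λ*) = x`. -/
theorem stmt9 {Ω : Type*} [MeasurableSpace Ω] (μ : Measure Ω) [IsProbabilityMeasure μ]
    (Z : Ω → ℝ) (hZmeas : Measurable Z) (hZpos : ∀ᵐ ω ∂μ, 0 < Z ω)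
    (hZint : Integrable Z μ) (hZmean : ∫ ω, Z ω ∂μ = 1)
    (hZsq : Integrable (fun ω => (Z ω) ^ 2) μ)
    (d : ℝ → ℝ)
    (hmap : Measure.map Z μ = volume.withDensity (fun t => ENNReal.ofReal (d t)))
    (hd_cont : ContinuousOn d (Set.Ioi 0)) (hd_pos : ∀ t ∈ Set.Ioi (0 : ℝ), 0 < d t)
    (C x k : ℝ) (hCx : C < x) (hxk : x < k)
    (V : ℝ → ℝ) (hV : V = fun lam => ∫ ω, Z ω * max (k - lam * Z ω) C ∂μ) :
    ContinuousOn V (Set.Ioi 0) ∧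
    StrictAntiOn V (Set.Ioi 0) ∧
    Tendsto V (𝓝[>] 0) (𝓝 k) ∧
    Tendsto V atTop (𝓝 C) ∧
    ∃ lam : ℝ, 0 < lam ∧ V lam = x := by
  subst hV
  have hCk : C < k := hCx.trans hxk
  set M : ℝ := max |C| |k| with hMdef
  have hM0 : 0 ≤ M := le_trans (abs_nonneg C) (le_max_left _ _)
  -- pointwise bound
  have hbound : ∀ lam : ℝ, 0 ≤ lam → ∀ z : ℝ, 0 ≤ z → |max (k - lam * z) C| ≤ M := by
    intro lam hlam z hz
    rw [abs_le]
    constructor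
    · have h1 : -M ≤ C := by
        have : |C| ≤ M := le_max_left _ _
        have := neg_abs_le C
        linarith
      exact h1.trans (le_max_right _ _)
    · have h1 : k - lam * z ≤ k := by nlinarith
      calc max (k - lam * z) C ≤ max k C := max_le_max h1 le_rfl
        _ ≤ M := max_le ((le_abs_self k).trans (le_max_right _ _))
            ((le_abs_self C).trans (le_max_left _ _))
  have hmeas : ∀ lam : ℝ, AEStronglyMeasurable (fun ω => Z ω * max (k - lam * Z ω) C) μ := by
    intro lam
    exact (hZmeas.mul (((measurable_const.sub (measurable_const.mul hZmeas)).max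
      measurable_const))).aestronglyMeasurable
  have hgint : Integrable (fun ω => M * |Z ω|) μ := hZint.abs.const_mul M
  have hnormle : ∀ lam : ℝ, 0 ≤ lam → ∀ᵐ ω ∂μ,
      ‖Z ω * max (k - lam * Z ω) C‖ ≤ M * |Z ω| := by
    intro lam hlam
    filter_upwards [hZpos] with ω hω
    rw [Real.norm_eq_abs, abs_mul]
    calc |Z ω| * |max (k - lam * Z ω) C| ≤ |Z ω| * M := by
          exact mul_le_mul_of_nonneg_left (hbound lam hlam (Z ω) hω.le) (abs_nonneg _)
      _ = M * |Z ω| := mul_comm _ _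
  have hint : ∀ lam : ℝ, 0 ≤ lam →
      Integrable (fun ω => Z ω * max (k - lam * Z ω) C) μ := by
    intro lam hlam
    refine hgint.mono (hmeas lam) ?_
    filter_upwards [hnormle lam hlam] with ω h
    calc ‖Z ω * max (k - lam * Z ω) C‖ ≤ M * |Z ω| := h
      _ ≤ ‖M * |Z ω|‖ := le_abs_self _
  -- continuity
  have hcont : ContinuousOn (fun lam => ∫ ω, Z ω * max (k - lam * Z ω) C ∂μ) (Set.Ioi 0) := by
    intro l0 hl0
    refine ContinuousAt.continuousWithinAt ?_
    refine continuousAt_of_dominated (bound := fun ω => M * |Z ω|) ?_ ?_ hgint ?_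
    · exact Eventually.of_forall fun l => hmeas l
    · filter_upwards [eventually_gt_nhds hl0] with l hl
      exact hnormle l hl.le
    · refine Eventually.of_forall fun ω => ?_
      have : Continuous fun l : ℝ => Z ω * max (k - l * Z ω) C := by
        exact continuous_const.mul ((continuous_const.sub
          (continuous_id.mul continuous_const)).max continuous_const)
      exact this.continuousAt
  -- positive measure of small intervals
  have hposmeas : ∀ b' : ℝ, 0 < b' → 0 < μ (Z ⁻¹' Set.Ioo 0 b') := by
    intro b' hb'
    have h1 : μ (Z ⁻¹' Set.Ioo 0 b') = Measure.map Z μ (Set.Ioo 0 b') :=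
      (Measure.map_apply hZmeas measurableSet_Ioo).symm
    rw [h1, hmap, withDensity_apply _ measurableSet_Ioo]
    set t0 : ℝ := b' / 2 with ht0def
    have ht0 : t0 ∈ Set.Ioi (0 : ℝ) := by simp [ht0def]; linarith
    have hdt0 : 0 < d t0 := hd_pos t0 ht0
    have hca : ContinuousAt d t0 := hd_cont.continuousAt (isOpen_Ioi.mem_nhds ht0)
    have hev : ∀ᶠ s in 𝓝 t0, d t0 / 2 < d s := hca.eventually (eventually_gt_nhds (by linarith))
    have hev2 : ∀ᶠ s in 𝓝 t0, s ∈ Set.Ioo 0 b' := by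
      refine IsOpen.eventually_mem isOpen_Ioo ?_
      constructor <;> [linarith; (rw [ht0def]; linarith)]
    obtain ⟨U, hUsub, hUopen, ht0U⟩ := eventually_nhds_iff.mp (hev.and hev2)
    have hUmeas : MeasurableSet U := hUopen.measurableSet
    have hUsub2 : U ⊆ Set.Ioo 0 b' := fun s hs => (hUsub s hs).2
    have step1 : ∫⁻ t in U, ENNReal.ofReal (d t) ≤ ∫⁻ t in Set.Ioo 0 b', ENNReal.ofReal (d t) :=
      lintegral_mono_set hUsub2
    have step2 : ENNReal.ofReal (d t0 / 2) * volume U ≤ ∫⁻ t in U, ENNReal.ofReal (d t) := by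
      rw [← setLIntegral_const U (ENNReal.ofReal (d t0 / 2))]
      refine lintegral_mono_ae ?_
      rw [ae_restrict_iff' hUmeas]
      exact ae_of_all _ fun s hs => ENNReal.ofReal_le_ofReal (hUsub s hs).1.le
    have hvolU : 0 < volume U := hUopen.measure_pos volume ⟨t0, ht0U⟩
    have hpos : 0 < ENNReal.ofReal (d t0 / 2) * volume U := by
      refine ENNReal.mul_pos ?_ hvolU.ne'
      simp [ENNReal.ofReal_pos]; linarith
    exact lt_of_lt_of_le hpos (step2.trans step1)
  -- strict antitone
  have hanti : StrictAntiOn (fun lam => ∫ ω, Z ω * max (k - lam * Z ω) C ∂μ) (Set.Ioi 0) := by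
    intro a ha b hb hab
    simp only [Set.mem_Ioi] at ha hb
    set D : Ω → ℝ := fun ω => Z ω * max (k - a * Z ω) C - Z ω * max (k - b * Z ω) C with hD
    have hDnonneg : 0 ≤ᶠ[ae μ] D := by
      filter_upwards [hZpos] with ω hω
      have h1 : max (k - b * Z ω) C ≤ max (k - a * Z ω) C := by
        refine max_le_max ?_ le_rfl
        nlinarith
      have : 0 ≤ Z ω * (max (k - a * Z ω) C - max (k - b * Z ω) C) :=
        mul_nonneg hω.le (by linarith)
      simp only [hD, Pi.zero_apply]; nlinarith
    have hDint : Integrable D μ := (hint a ha.le).sub (hint b hb.le)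
    have hsub : Z ⁻¹' Set.Ioo 0 ((k - C) / b) ⊆ Function.support D := by
      intro ω hω
      simp only [Set.mem_preimage, Set.mem_Ioo] at hω
      obtain ⟨hω1, hω2⟩ := hω
      have hbz : k - b * Z ω > C := by
        rw [lt_div_iff₀ hb] at hω2; linarith
      have h2 : max (k - b * Z ω) C = k - b * Z ω := max_eq_left hbz.le
      have h3 : k - b * Z ω < max (k - a * Z ω) C := by
        have : k - b * Z ω < k - a * Z ω := by nlinarith
        exact lt_of_lt_of_le this (le_max_left _ _)
      have : 0 < D ω := by
        simp only [hD]
        rw [h2]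
        nlinarith
      exact fun h => by rw [h] at this; exact lt_irrefl 0 this
    have hsupp : 0 < μ (Function.support D) :=
      lt_of_lt_of_le (hposmeas _ (div_pos (by linarith) hb)) (measure_mono hsub)
    have hDpos : 0 < ∫ ω, D ω ∂μ :=
      (integral_pos_iff_support_of_nonneg_ae hDnonneg hDint).mpr hsupp
    have heq : ∫ ω, D ω ∂μ = (∫ ω, Z ω * max (k - a * Z ω) C ∂μ)
        - ∫ ω, Z ω * max (k - b * Z ω) C ∂μ := integral_sub (hint a ha.le) (hint b hb.le)
    simp only at heq ⊢
    linarith [heq ▸ hDpos]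
  -- limit at 0+
  have hlim0 : Tendsto (fun lam => ∫ ω, Z ω * max (k - lam * Z ω) C ∂μ) (𝓝[>] 0) (𝓝 k) := by
    have hkey : Tendsto (fun lam => ∫ ω, Z ω * max (k - lam * Z ω) C ∂μ) (𝓝[>] 0)
        (𝓝 (∫ ω, Z ω * k ∂μ)) := by
      refine tendsto_integral_filter_of_dominated_convergence (fun ω => M * |Z ω|)
        (Eventually.of_forall fun l => hmeas l) ?_ hgint ?_
      · filter_upwards [self_mem_nhdsWithin] with l hl
        exact hnormle l (le_of_lt hl)
      · refine Eventually.of_forall fun ω => ?_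
        have hc : Continuous fun l : ℝ => Z ω * max (k - l * Z ω) C :=
          continuous_const.mul ((continuous_const.sub
            (continuous_id.mul continuous_const)).max continuous_const)
        have := (hc.tendsto 0).mono_left (nhdsWithin_le_nhds : 𝓝[>] (0:ℝ) ≤ 𝓝 0)
        simpa [max_eq_left hCk.le] using this
    have : ∫ ω, Z ω * k ∂μ = k := by
      rw [integral_mul_const, hZmean, one_mul]
    rwa [this] at hkey
  -- limit at ∞
  have hlimInf : Tendsto (fun lam => ∫ ω, Z ω * max (k - lam * Z ω) C ∂μ) atTop (𝓝 C) := by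
    have hkey : Tendsto (fun lam => ∫ ω, Z ω * max (k - lam * Z ω) C ∂μ) atTop
        (𝓝 (∫ ω, Z ω * C ∂μ)) := by
      refine tendsto_integral_filter_of_dominated_convergence (fun ω => M * |Z ω|)
        (Eventually.of_forall fun l => hmeas l) ?_ hgint ?_
      · filter_upwards [eventually_ge_atTop (0 : ℝ)] with l hl
        exact hnormle l hl
      · filter_upwards [hZpos] with ω hω
        have hevc : ∀ᶠ l in atTop, Z ω * max (k - l * Z ω) C = Z ω * C := by
          filter_upwards [eventually_ge_atTop ((k - C) / Z ω)] with l hl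
          have : k - l * Z ω ≤ C := by
            rw [div_le_iff₀ hω] at hl; linarith
          rw [max_eq_right this]
        exact Tendsto.congr' (hevc.mono fun l h => h.symm) tendsto_const_nhds
    have : ∫ ω, Z ω * C ∂μ = C := by
      rw [integral_mul_const, hZmean, one_mul]
    rwa [this] at hkey
  refine ⟨hcont, hanti, hlim0, hlimInf, ?_⟩
  -- existence via IVT
  obtain ⟨l1, hl1pos, hl1⟩ : ∃ l1 : ℝ, 0 < l1 ∧
      x < ∫ ω, Z ω * max (k - l1 * Z ω) C ∂μ := by
    have hev : ∀ᶠ l in 𝓝[>] (0:ℝ), x < ∫ ω, Z ω * max (k - l * Z ω) C ∂μ :=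
      hlim0.eventually (eventually_gt_nhds hxk)
    have := (hev.and self_mem_nhdsWithin).exists
    obtain ⟨l, hl, hlpos⟩ := this
    exact ⟨l, hlpos, hl⟩
  obtain ⟨l2, hl2pos, hl2⟩ : ∃ l2 : ℝ, 0 < l2 ∧
      (∫ ω, Z ω * max (k - l2 * Z ω) C ∂μ) < x := by
    have hev : ∀ᶠ l in atTop, (∫ ω, Z ω * max (k - l * Z ω) C ∂μ) < x :=
      hlimInf.eventually (eventually_lt_nhds hCx)
    obtain ⟨l, hl, hlpos⟩ := (hev.and (eventually_gt_atTop 0)).exists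
    exact ⟨l, hlpos, hl⟩
  have hl12 : l1 < l2 := by
    by_contra h
    push_neg at h
    rcases eq_or_lt_of_le h with h' | h'
    · rw [h'] at hl2; linarith
    · have := hanti (Set.mem_Ioi.mpr hl2pos) (Set.mem_Ioi.mpr hl1pos) h'
      simp only at this; linarith
  have hIccsub : Set.Icc l1 l2 ⊆ Set.Ioi 0 := fun t ht => lt_of_lt_of_le hl1pos ht.1
  have hivt := intermediate_value_Icc' hl12.le (hcont.mono hIccsub)
  have hx : x ∈ Set.Icc ((fun lam => ∫ ω, Z ω * max (k - lam * Z ω) C ∂μ) l2)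
      ((fun lam => ∫ ω, Z ω * max (k - lam * Z ω) C ∂μ) l1) := ⟨hl2.le, hl1.le⟩
  obtain ⟨lam, hlam, hlamx⟩ := hivt hx
  exact ⟨lam, lt_of_lt_of_le hl1pos hlam.1, hlamx⟩
end

section
/- Let Z be a positive random variable with E[Z] = 1 and E[Z²] = M. For k > x and λ_U* = (k - x)/M, the payoff X* = k - λ_U* Z satisfies: for every random variable X with E[ZX] = x and X ≤ k a.s., E[-(1/2)(k - X*)²] ≥ E[-(1/2)(k - X)²]. -/
open MeasureTheory

/-- For a positive r.v. `Z` with `E[Z] = 1`, `E[Z²] = M`, `x < k`, and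
`λ_U* = (k-x)/M`, the payoff `X* = k - λ_U* Z` satisfies: for every r.v. `X` with
`E[ZX] = x` and `X ≤ k` a.s., `E[-(1/2)(k - X*)²] ≥ E[-(1/2)(k - X)²]`. -/
theorem stmt17 {Ω : Type*} [MeasurableSpace Ω] (μ : Measure Ω) [IsProbabilityMeasure μ]
    (Z : Ω → ℝ) (hZmeas : Measurable Z) (hZpos : ∀ᵐ ω ∂μ, 0 < Z ω)
    (hZint : Integrable Z μ) (hZmean : ∫ ω, Z ω ∂μ = 1)
    (M : ℝ) (hZsq : Integrable (fun ω => (Z ω) ^ 2) μ) (hM : ∫ ω, (Z ω) ^ 2 ∂μ = M)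
    (k x : ℝ) (hxk : x < k)
    (lamU : ℝ) (hlamU : lamU = (k - x) / M)
    (Xstar : Ω → ℝ) (hXstar : Xstar = fun ω => k - lamU * Z ω) :
    ∀ X : Ω → ℝ, AEMeasurable X μ →
      Integrable (fun ω => Z ω * X ω) μ → ∫ ω, Z ω * X ω ∂μ = x →
      (∀ᵐ ω ∂μ, X ω ≤ k) →
      Integrable (fun ω => (k - X ω) ^ 2) μ →
      ∫ ω, -(1 / 2) * (k - X ω) ^ 2 ∂μ ≤ ∫ ω, -(1 / 2) * (k - Xstar ω) ^ 2 ∂μ := by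
  intro X hXmeas hZXint hZXmean hXle hX2int
  -- M ≥ 1 > 0
  have hsub1 : Integrable (fun ω => (Z ω) ^ 2 - 2 * Z ω) μ :=
    hZsq.sub (hZint.const_mul 2)
  have hZ1 : (0:ℝ) ≤ M - 1 := by
    have h0 : 0 ≤ ∫ ω, ((Z ω) ^ 2 - 2 * Z ω) + 1 ∂μ := by
      apply integral_nonneg
      intro ω
      simp only [Pi.zero_apply]
      nlinarith [sq_nonneg (Z ω - 1)]
    have e1 := integral_add hsub1 (integrable_const (1:ℝ))
    have e2 := integral_sub hZsq (hZint.const_mul 2)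
    have e3 := integral_const_mul (μ := μ) (2:ℝ) Z
    have e4 : (∫ _ω : Ω, (1:ℝ) ∂μ) = 1 := by simp
    rw [e1, e2, e3, e4, hM, hZmean] at h0
    linarith
  have hMpos : (0:ℝ) < M := by linarith
  -- Z * (k - X) : integrable with integral k - x
  have hZkX : Integrable (fun ω => k * Z ω - Z ω * X ω) μ :=
    (hZint.const_mul k).sub hZXint
  have hZkXval : (∫ ω, k * Z ω - Z ω * X ω ∂μ) = k - x := by
    rw [integral_sub (hZint.const_mul k) hZXint, integral_const_mul, hZmean, hZXmean]
    ring
  set I := ∫ ω, (k - X ω) ^ 2 ∂μ with hI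
  -- key: E[(lamU Z - (k-X))²] ≥ 0
  have hsub2 : Integrable (fun ω => lamU ^ 2 * (Z ω) ^ 2
      - 2 * lamU * (k * Z ω - Z ω * X ω)) μ :=
    (hZsq.const_mul _).sub (hZkX.const_mul _)
  have hkey : 0 ≤ lamU ^ 2 * M - 2 * lamU * (k - x) + I := by
    have h0 : 0 ≤ ∫ ω, (lamU ^ 2 * (Z ω) ^ 2
        - 2 * lamU * (k * Z ω - Z ω * X ω)) + (k - X ω) ^ 2 ∂μ := by
      apply integral_nonneg
      intro ω
      simp only [Pi.zero_apply]
      nlinarith [sq_nonneg (lamU * Z ω - (k - X ω))]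
    have e1 := integral_add hsub2 hX2int
    have e2 := integral_sub (hZsq.const_mul (lamU ^ 2)) (hZkX.const_mul (2 * lamU))
    have e3 := integral_const_mul (μ := μ) (lamU ^ 2) (fun ω => (Z ω) ^ 2)
    have e4 := integral_const_mul (μ := μ) (2 * lamU) (fun ω => k * Z ω - Z ω * X ω)
    rw [e1, e2, e3, e4, hM, hZkXval] at h0
    exact h0
  -- compute both sides
  have hlhs : (∫ ω, -(1 / 2) * (k - X ω) ^ 2 ∂μ) = -(1 / 2) * I :=
    integral_const_mul _ _
  have hrhs : (∫ ω, -(1 / 2) * (k - Xstar ω) ^ 2 ∂μ) = -(1 / 2) * (lamU ^ 2 * M) := by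
    have h : (fun ω => -(1 / 2) * (k - Xstar ω) ^ 2)
        = fun ω => (-(1 / 2) * lamU ^ 2) * (Z ω) ^ 2 := by
      funext ω; rw [hXstar]; ring
    rw [h, integral_const_mul, hM]; ring
  rw [hlhs, hrhs]
  have hlam : lamU * M = k - x := by
    rw [hlamU]; field_simp
  nlinarith [hkey, sq_nonneg lamU]
end

section
/- Let Z be a positive random variable with E[Z] = 1 and E[Z²] < ∞, and let C ≤ x < k. Suppose λ* > 0 satisfies E[Z·max(k - λ*Z, C)] = x. Then X* = max(k - λ*Z, C) maximizes E[-(1/2)(k - X)²] over all random variables X with C ≤ X ≤ k a.s. and E[ZX] = x. -/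
open MeasureTheory

lemma stmt18_key (c C k t : ℝ) (hc : 0 < c) (ht1 : C ≤ t) (ht2 : t ≤ k) :
    -(1/2) * (k - t)^2 - c * t ≤
      -(1/2) * (k - max (k - c) C)^2 - c * max (k - c) C := by
  rcases le_or_gt C (k - c) with h | h
  · rw [max_eq_left h]; nlinarith [sq_nonneg (k - t - c)]
  · rw [max_eq_right h.le]
    nlinarith [sq_nonneg (t - C), mul_nonneg (sub_nonneg.2 ht1) (sub_nonneg.2 ht2),
      mul_nonneg (sub_nonneg.2 ht1) (by linarith : (0:ℝ) ≤ c - (k - C))]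

/-- For a positive r.v. `Z` with `E[Z] = 1`, finite second moment,
`C ≤ x < k`, and `λ* > 0` solving the budget equation `E[Z·max(k - λ*Z, C)] = x`, the
payoff `X* = max(k - λ*Z, C)` maximizes `E[-(1/2)(k - X)²]` over all r.v.s `X` with
`C ≤ X ≤ k` a.s. and `E[ZX] = x`. -/
theorem stmt18 {Ω : Type*} [MeasurableSpace Ω] (μ : Measure Ω) [IsProbabilityMeasure μ]
    (Z : Ω → ℝ) (hZmeas : Measurable Z) (hZpos : ∀ᵐ ω ∂μ, 0 < Z ω)
    (hZint : Integrable Z μ) (hZmean : ∫ ω, Z ω ∂μ = 1)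
    (hZsq : Integrable (fun ω => (Z ω) ^ 2) μ)
    (C x k : ℝ) (hCx : C ≤ x) (hxk : x < k)
    (lam : ℝ) (hlam : 0 < lam)
    (Xstar : Ω → ℝ) (hXstar : Xstar = fun ω => max (k - lam * Z ω) C)
    (hbudget : ∫ ω, Z ω * Xstar ω ∂μ = x) :
    ∀ X : Ω → ℝ, AEMeasurable X μ →
      (∀ᵐ ω ∂μ, C ≤ X ω ∧ X ω ≤ k) →
      Integrable (fun ω => Z ω * X ω) μ → ∫ ω, Z ω * X ω ∂μ = x →
      Integrable (fun ω => (k - X ω) ^ 2) μ →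
      ∫ ω, -(1 / 2) * (k - X ω) ^ 2 ∂μ ≤ ∫ ω, -(1 / 2) * (k - Xstar ω) ^ 2 ∂μ := by
  intro X hXmeas hXbdd hZX_int hZX_eq hX2_int
  have hCk : C ≤ k := hCx.trans hxk.le
  have hXstar_meas : Measurable Xstar := by
    rw [hXstar]; exact (measurable_const.sub (hZmeas.const_mul lam)).max measurable_const
  have hXstar_bdd : ∀ᵐ ω ∂μ, C ≤ Xstar ω ∧ Xstar ω ≤ k := by
    filter_upwards [hZpos] with ω hz
    rw [hXstar]
    refine ⟨le_max_right _ _, max_le (by nlinarith) hCk⟩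
  -- integrability for Xstar pieces
  have hZXstar_int : Integrable (fun ω => Z ω * Xstar ω) μ := by
    refine Integrable.mono' (hZint.abs.mul_const (max |C| |k|))
      ((hZmeas.mul hXstar_meas).aestronglyMeasurable) ?_
    filter_upwards [hXstar_bdd] with ω ⟨h1, h2⟩
    have habs : |Xstar ω| ≤ max |C| |k| := by
      rw [abs_le]
      constructor
      · calc -(max |C| |k|) ≤ -|C| := by simp [le_max_left]
          _ ≤ C := neg_abs_le C
          _ ≤ Xstar ω := h1
      · exact h2.trans ((le_abs_self k).trans (le_max_right _ _))
    rw [Real.norm_eq_abs, abs_mul]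
    exact mul_le_mul_of_nonneg_left habs (abs_nonneg _)
  have hXstar2_int : Integrable (fun ω => (k - Xstar ω) ^ 2) μ := by
    refine Integrable.mono' (integrable_const ((k - C)^2))
      ((measurable_const.sub hXstar_meas).pow_const 2).aestronglyMeasurable ?_
    filter_upwards [hXstar_bdd] with ω ⟨h1, h2⟩
    rw [Real.norm_eq_abs, abs_of_nonneg (sq_nonneg _)]
    nlinarith
  -- the Lagrangian functions
  set f : Ω → ℝ := fun ω => -(1/2) * (k - X ω) ^ 2 - lam * (Z ω * X ω) with hf
  set g : Ω → ℝ := fun ω => -(1/2) * (k - Xstar ω) ^ 2 - lam * (Z ω * Xstar ω) with hg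
  have hf_int : Integrable f μ := (hX2_int.const_mul _).sub (hZX_int.const_mul lam)
  have hg_int : Integrable g μ := (hXstar2_int.const_mul _).sub (hZXstar_int.const_mul lam)
  have hae : ∀ᵐ ω ∂μ, f ω ≤ g ω := by
    filter_upwards [hZpos, hXbdd] with ω hz ⟨h1, h2⟩
    have h := stmt18_key (lam * Z ω) C k (X ω) (by positivity) h1 h2
    simp only [hf, hg, hXstar]
    nlinarith [h]
  have hint : ∫ ω, f ω ∂μ ≤ ∫ ω, g ω ∂μ := integral_mono_ae hf_int hg_int hae
  have e1 : ∫ ω, f ω ∂μ = (∫ ω, -(1/2) * (k - X ω) ^ 2 ∂μ) - lam * x := by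
    rw [hf]
    rw [integral_sub (hX2_int.const_mul _) (hZX_int.const_mul lam),
      integral_const_mul, integral_const_mul, hZX_eq]
  have e2 : ∫ ω, g ω ∂μ = (∫ ω, -(1/2) * (k - Xstar ω) ^ 2 ∂μ) - lam * x := by
    rw [hg]
    rw [integral_sub (hXstar2_int.const_mul _) (hZXstar_int.const_mul lam),
      integral_const_mul, integral_const_mul, hbudget]
  linarith [hint, e1.symm, e2.symm]
end

section
/- Let Z be a positive random variable with E[Z] = 1 and E[Z²] < ∞, let C ≤ x < k and ν > 0. Suppose 0 < δ* ≤ λ* satisfy E[Z·(C - X*)₊] = ν and E[Z·X*] = x, where X* equals k - λ*Z when Z ≤ (k-C)/λ*, equals C when (k-C)/λ* ≤ Z ≤ (k-C)/δ*, and equals k - δ*Z when Z > (k-C)/δ*. Then X* maximizes E[-(1/2)(k - X)²] over all X ≤ k a.s. with E[ZX] = x and E[Z(C - X)₊] ≤ ν. -/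
open MeasureTheory

lemma key19 (C k δ lam z y xs : ℝ) (hδ : 0 < δ) (hδlam : δ ≤ lam)
    (hz : 0 < z)
    (hxs : xs = if z ≤ (k - C) / lam then k - lam * z
      else if z ≤ (k - C) / δ then C else k - δ * z) :
    -(1/2) * (k - y)^2 ≤ -(1/2) * (k - xs)^2 + lam * (z * y - z * xs)
      + (lam - δ) * (z * max (C - y) 0 - z * max (C - xs) 0) := by
  have hlam : 0 < lam := hδ.trans_le hδlam
  by_cases h1 : z ≤ (k - C) / lam
  · have hlz : z * lam ≤ k - C := (le_div_iff₀ hlam).mp h1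
    rw [if_pos h1] at hxs
    subst hxs
    rw [max_eq_right (by nlinarith : C - (k - lam * z) ≤ 0)]
    rcases le_or_gt y C with hyC | hyC
    · rw [max_eq_left (by linarith)]
      nlinarith [sq_nonneg (k - y - lam * z),
        mul_nonneg (mul_nonneg (sub_nonneg.2 hδlam) hz.le) (sub_nonneg.2 hyC)]
    · rw [max_eq_right (by linarith)]
      nlinarith [sq_nonneg (k - y - lam * z)]
  · have hlz : k - C < z * lam := (div_lt_iff₀ hlam).mp (not_le.mp h1)
    rw [if_neg h1] at hxs
    by_cases h2 : z ≤ (k - C) / δ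
    · have hdz : z * δ ≤ k - C := (le_div_iff₀ hδ).mp h2
      rw [if_pos h2] at hxs
      rw [hxs, sub_self, max_self]
      rcases le_or_gt y C with hyC | hyC
      · rw [max_eq_left (by linarith)]
        nlinarith [sq_nonneg (C - y), mul_nonneg (sub_nonneg.2 hyC) (sub_nonneg.2 hdz)]
      · rw [max_eq_right (by linarith)]
        nlinarith [sq_nonneg (y - C), mul_nonneg (sub_nonneg.2 hyC.le) (sub_nonneg.2 hlz.le)]
    · have hdz : k - C < z * δ := (div_lt_iff₀ hδ).mp (not_le.mp h2)
      rw [if_neg h2] at hxs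
      subst hxs
      rw [max_eq_left (by nlinarith : (0:ℝ) ≤ C - (k - δ * z))]
      rcases le_or_gt y C with hyC | hyC
      · rw [max_eq_left (by linarith)]
        nlinarith [sq_nonneg (k - y - δ * z)]
      · rw [max_eq_right (by linarith)]
        nlinarith [sq_nonneg (k - y - δ * z),
          mul_nonneg (mul_nonneg (sub_nonneg.2 hδlam) hz.le) (sub_nonneg.2 hyC.le)]

/-- `ℚ`-expected-shortfall optimality. For a positive r.v. `Z` with
`E[Z] = 1`, finite second moment, `C ≤ x < k`, `C < k`, `ν > 0`, and `0 < δ* ≤ λ*` such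
that the piecewise payoff `X*` (equal to `k - λ*Z` when `Z ≤ (k-C)/λ*`, to `C` when
`(k-C)/λ* ≤ Z ≤ (k-C)/δ*`, and to `k - δ*Z` when `Z > (k-C)/δ*`) satisfies
`E[Z(C - X*)₊] = ν` and `E[ZX*] = x`, the payoff `X*` maximizes `E[-(1/2)(k - X)²]` over
all `X ≤ k` a.s. with `E[ZX] = x` and `E[Z(C - X)₊] ≤ ν`. -/
theorem stmt19 {Ω : Type*} [MeasurableSpace Ω] (μ : Measure Ω) [IsProbabilityMeasure μ]
    (Z : Ω → ℝ) (hZmeas : Measurable Z) (hZpos : ∀ᵐ ω ∂μ, 0 < Z ω)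
    (hZint : Integrable Z μ) (hZmean : ∫ ω, Z ω ∂μ = 1)
    (hZsq : Integrable (fun ω => (Z ω) ^ 2) μ)
    (C x k ν : ℝ) (hCx : C ≤ x) (hxk : x < k) (hCk : C < k) (hν : 0 < ν)
    (δ lam : ℝ) (hδ : 0 < δ) (hδlam : δ ≤ lam)
    (Xstar : Ω → ℝ)
    (hXstar : Xstar = fun ω =>
      if Z ω ≤ (k - C) / lam then k - lam * Z ω
      else if Z ω ≤ (k - C) / δ then C
      else k - δ * Z ω)
    (hshortfall : ∫ ω, Z ω * max (C - Xstar ω) 0 ∂μ = ν)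
    (hbudget : ∫ ω, Z ω * Xstar ω ∂μ = x) :
    ∀ X : Ω → ℝ, AEMeasurable X μ →
      (∀ᵐ ω ∂μ, X ω ≤ k) →
      Integrable (fun ω => Z ω * X ω) μ → ∫ ω, Z ω * X ω ∂μ = x →
      Integrable (fun ω => Z ω * max (C - X ω) 0) μ →
      ∫ ω, Z ω * max (C - X ω) 0 ∂μ ≤ ν →
      Integrable (fun ω => (k - X ω) ^ 2) μ →
      ∫ ω, -(1 / 2) * (k - X ω) ^ 2 ∂μ ≤ ∫ ω, -(1 / 2) * (k - Xstar ω) ^ 2 ∂μ := by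
  intro X hXmeas hXle hXint1 hXbud hXint2 hXsf hXint3
  have hlam : 0 < lam := hδ.trans_le hδlam
  have hXsmeas : Measurable Xstar := by
    rw [hXstar]
    exact Measurable.ite (measurableSet_le hZmeas measurable_const)
      (measurable_const.sub (hZmeas.const_mul lam))
      (Measurable.ite (measurableSet_le hZmeas measurable_const) measurable_const
        (measurable_const.sub (hZmeas.const_mul δ)))
  -- pointwise bounds on Xstar
  have hXsabs : ∀ᵐ ω ∂μ, |Xstar ω| ≤ |k| + |C| + lam * Z ω := by
    filter_upwards [hZpos] with ω hz
    have h1 : (0:ℝ) ≤ |k| := abs_nonneg _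
    have h2 : (0:ℝ) ≤ |C| := abs_nonneg _
    have h3 := le_abs_self k; have h4 := neg_abs_le k
    have h5 := le_abs_self C; have h6 := neg_abs_le C
    have h7 : 0 < lam * Z ω := mul_pos hlam hz
    have h8 : δ * Z ω ≤ lam * Z ω := mul_le_mul_of_nonneg_right hδlam hz.le
    have h9 : 0 < δ * Z ω := mul_pos hδ hz
    rw [hXstar]
    simp only
    split_ifs <;> rw [abs_le] <;> constructor <;> linarith
  have hmaxXs : ∀ᵐ ω ∂μ, max (C - Xstar ω) 0 ≤ lam * Z ω := by
    filter_upwards [hZpos] with ω hz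
    have h7 : 0 < lam * Z ω := mul_pos hlam hz
    have h8 : δ * Z ω ≤ lam * Z ω := mul_le_mul_of_nonneg_right hδlam hz.le
    rw [hXstar]
    simp only
    split_ifs <;> exact max_le (by linarith) (by linarith)
  have hsqXs : ∀ᵐ ω ∂μ, (k - Xstar ω)^2 ≤ (k - C)^2 + lam^2 * Z ω^2 := by
    filter_upwards [hZpos] with ω hz
    have h8 : δ * Z ω ≤ lam * Z ω := mul_le_mul_of_nonneg_right hδlam hz.le
    have h9 : 0 < δ * Z ω := mul_pos hδ hz
    rw [hXstar]
    simp only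
    split_ifs <;> nlinarith [sq_nonneg (k - C), sq_nonneg (lam * Z ω)]
  -- integrability for Xstar terms
  have hZXs_int : Integrable (fun ω => Z ω * Xstar ω) μ := by
    have hg : Integrable (fun ω => (|k| + |C|) * Z ω + lam * Z ω ^ 2) μ :=
      (hZint.const_mul _).add (hZsq.const_mul _)
    refine hg.mono' (hZmeas.mul hXsmeas).aestronglyMeasurable ?_
    filter_upwards [hZpos, hXsabs] with ω hz habs
    rw [Real.norm_eq_abs, abs_mul, abs_of_pos hz]
    calc Z ω * |Xstar ω| ≤ Z ω * (|k| + |C| + lam * Z ω) :=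
          mul_le_mul_of_nonneg_left habs hz.le
      _ = (|k| + |C|) * Z ω + lam * Z ω ^ 2 := by ring
  have hZmaxXs_int : Integrable (fun ω => Z ω * max (C - Xstar ω) 0) μ := by
    refine (hZsq.const_mul lam).mono'
      ((hZmeas.mul ((measurable_const.sub hXsmeas).max measurable_const)).aestronglyMeasurable) ?_
    filter_upwards [hZpos, hmaxXs] with ω hz hm
    rw [Real.norm_eq_abs, abs_of_nonneg (mul_nonneg hz.le (le_max_right _ _))]
    calc Z ω * max (C - Xstar ω) 0 ≤ Z ω * (lam * Z ω) :=
          mul_le_mul_of_nonneg_left hm hz.le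
      _ = lam * Z ω ^ 2 := by ring
  have hXsSq_int : Integrable (fun ω => (k - Xstar ω) ^ 2) μ := by
    have hg : Integrable (fun ω => (k - C)^2 + lam^2 * Z ω ^ 2) μ :=
      (integrable_const _).add (hZsq.const_mul _)
    refine hg.mono' ((measurable_const.sub hXsmeas).pow_const 2).aestronglyMeasurable ?_
    filter_upwards [hsqXs] with ω h
    rw [Real.norm_eq_abs, abs_of_nonneg (sq_nonneg _)]
    exact h
  -- the Lagrangian comparison function
  set φ : Ω → ℝ := fun ω => -(1/2) * (k - Xstar ω)^2 + lam * (Z ω * X ω - Z ω * Xstar ω)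
      + (lam - δ) * (Z ω * max (C - X ω) 0 - Z ω * max (C - Xstar ω) 0) with hφ
  have hf1 : Integrable (fun ω => -(1/2) * (k - Xstar ω)^2) μ := hXsSq_int.const_mul _
  have hf2 : Integrable (fun ω => lam * (Z ω * X ω - Z ω * Xstar ω)) μ :=
    (hXint1.sub hZXs_int).const_mul _
  have hf3 : Integrable (fun ω => (lam - δ) * (Z ω * max (C - X ω) 0 - Z ω * max (C - Xstar ω) 0)) μ :=
    (hXint2.sub hZmaxXs_int).const_mul _
  have hφint : Integrable φ μ := (hf1.add hf2).add hf3
  have hpt : ∀ᵐ ω ∂μ, -(1/2) * (k - X ω)^2 ≤ φ ω := by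
    filter_upwards [hZpos] with ω hz
    have := key19 C k δ lam (Z ω) (X ω) (Xstar ω) hδ hδlam hz (by rw [hXstar])
    simpa [hφ] using this
  have hL : Integrable (fun ω => -(1/2) * (k - X ω)^2) μ := hXint3.const_mul _
  have step1 : ∫ ω, -(1/2) * (k - X ω)^2 ∂μ ≤ ∫ ω, φ ω ∂μ :=
    integral_mono_ae hL hφint hpt
  have hφval : ∫ ω, φ ω ∂μ = (∫ ω, -(1/2) * (k - Xstar ω)^2 ∂μ)
      + lam * ((∫ ω, Z ω * X ω ∂μ) - ∫ ω, Z ω * Xstar ω ∂μ)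
      + (lam - δ) * ((∫ ω, Z ω * max (C - X ω) 0 ∂μ) - ∫ ω, Z ω * max (C - Xstar ω) 0 ∂μ) := by
    have h123 : ∫ ω, φ ω ∂μ
        = (∫ ω, (-(1/2) * (k - Xstar ω)^2 + lam * (Z ω * X ω - Z ω * Xstar ω)) ∂μ)
          + ∫ ω, (lam - δ) * (Z ω * max (C - X ω) 0 - Z ω * max (C - Xstar ω) 0) ∂μ :=
      integral_add (hf1.add hf2) hf3
    have h12 : ∫ ω, (-(1/2) * (k - Xstar ω)^2 + lam * (Z ω * X ω - Z ω * Xstar ω)) ∂μ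
        = (∫ ω, -(1/2) * (k - Xstar ω)^2 ∂μ) + ∫ ω, lam * (Z ω * X ω - Z ω * Xstar ω) ∂μ :=
      integral_add hf1 hf2
    have hm1 : ∫ ω, lam * (Z ω * X ω - Z ω * Xstar ω) ∂μ
        = lam * ∫ ω, (Z ω * X ω - Z ω * Xstar ω) ∂μ := integral_const_mul _ _
    have hs1 : ∫ ω, (Z ω * X ω - Z ω * Xstar ω) ∂μ
        = (∫ ω, Z ω * X ω ∂μ) - ∫ ω, Z ω * Xstar ω ∂μ := integral_sub hXint1 hZXs_int
    have hm2 : ∫ ω, (lam - δ) * (Z ω * max (C - X ω) 0 - Z ω * max (C - Xstar ω) 0) ∂μ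
        = (lam - δ) * ∫ ω, (Z ω * max (C - X ω) 0 - Z ω * max (C - Xstar ω) 0) ∂μ :=
      integral_const_mul _ _
    have hs2 : ∫ ω, (Z ω * max (C - X ω) 0 - Z ω * max (C - Xstar ω) 0) ∂μ
        = (∫ ω, Z ω * max (C - X ω) 0 ∂μ) - ∫ ω, Z ω * max (C - Xstar ω) 0 ∂μ :=
      integral_sub hXint2 hZmaxXs_int
    rw [h123, h12, hm1, hs1, hm2, hs2]
  have hfinal : ∫ ω, φ ω ∂μ ≤ ∫ ω, -(1/2) * (k - Xstar ω)^2 ∂μ := by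
    rw [hφval, hbudget, hXbud, hshortfall]
    have h1 : (lam - δ) * ((∫ ω, Z ω * max (C - X ω) 0 ∂μ) - ν) ≤ 0 :=
      mul_nonpos_of_nonneg_of_nonpos (by linarith) (by linarith)
    linarith
  have : (1:ℝ)/2 = 1/2 := rfl
  calc ∫ ω, -(1 / 2) * (k - X ω) ^ 2 ∂μ ≤ ∫ ω, φ ω ∂μ := step1
    _ ≤ ∫ ω, -(1 / 2) * (k - Xstar ω) ^ 2 ∂μ := hfinal
end
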